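/- Cvijović–Miller reduction formula. Let α, β, a, c, d be complex with β and c not nonpositive integers. Then for every complex x with |x| < 1 and Re x < 1/2, Σ_{i=0}^{∞} Σ_{n=0}^{∞} ( (α)_{i+n} / (β)_{i+n} ) · (a)_i (β − d)_i (d)_n x^{i+n} / ( (c)_i i! n! ) = (1 − x)^{−α} · Σ_{n=0}^{∞} (α)_n (β − d)_n (c − a)_n (x/(x−1))^n / ( (β)_n (c)_n n! ), where (1 − x)^{−α} denotes the principal branch. -/

import Mathlib

/-- Pochhammer symbol `(a)ₖ = a(a+1)⋯(a+k−1)` for complex `a`. -/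
noncomputable def poch (a : ℂ) (k : ℕ) : ℂ := ∏ i ∈ Finset.range k, (a + i)

/-!
Grouping the double series on the left by total degree `m = i + n` turns it into a power series
`∑ cₘ xᵐ` with `cₘ = kampeDeFerietCoeff α β a c d m`. On the right, `(1 - x)^(-α) (x / (x - 1))ⁿ`
equals `(-x)ⁿ (1 - x)^(-α-n)`; expanding the last factor by the binomial series gives a double
series that converges absolutely for `‖x‖ < 1/2`, and its diagonal sums are again `cₘ xᵐ`. That
the two coefficient formulas agree is a finite identity between Pochhammer symbols, obtained from
two instances of the Chu–Vandermonde convolution. Both sides are analytic on the convex domain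
`‖x‖ < 1, Re x < 1/2` (where `‖x / (x - 1)‖ < 1`), so they agree on all of it by the identity
theorem.
-/

open Finset Polynomial FormalMultilinearSeries Metric Filter Topology
open scoped Nat NNReal

lemma poch_eq_eval_ascPochhammer (a : ℂ) (k : ℕ) : poch a k = (ascPochhammer ℂ k).eval a := by
  induction k with
  | zero => simp [poch]
  | succ k ih => rw [ascPochhammer_succ_eval, ← ih, poch, prod_range_succ, poch]

lemma poch_add (a : ℂ) (m n : ℕ) : poch a (m + n) = poch a m * poch (a + m) n := by
  simp only [poch, prod_range_add, Nat.cast_add, add_assoc]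

lemma poch_one (n : ℕ) : poch 1 n = n ! := by
  rw [poch_eq_eval_ascPochhammer, ascPochhammer_eval_one]

lemma poch_ne_zero {a : ℂ} (ha : ∀ k : ℕ, a ≠ -k) (n : ℕ) : poch a n ≠ 0 :=
  prod_ne_zero_iff.2 fun k _ h => ha k (eq_neg_of_add_eq_zero_left h)

lemma poch_add_natCast_ne_zero {c : ℂ} (hc : ∀ k : ℕ, c ≠ -k) (n k : ℕ) : poch (c + n) k ≠ 0 :=
  poch_ne_zero (fun j h => hc (n + j) (by push_cast; linear_combination h)) k

lemma poch_eq_smeval_descPochhammer (a : ℂ) (k : ℕ) :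
    poch a k = (descPochhammer ℤ k).smeval (a + k - 1) := by
  rw [descPochhammer_smeval_eq_ascPochhammer, ascPochhammer_smeval_eq_eval,
    poch_eq_eval_ascPochhammer]
  ring_nf

lemma poch_eq_neg_one_pow_mul_smeval_descPochhammer (a : ℂ) (k : ℕ) :
    poch a k = (-1) ^ k * (descPochhammer ℤ k).smeval (-a) := by
  rw [← aeval_eq_smeval, ← eval_map_algebraMap, descPochhammer_map,
    ← ascPochhammer_eval_neg_eq_descPochhammer, neg_neg, poch_eq_eval_ascPochhammer]

lemma smeval_descPochhammer_add (r s : ℂ) (m : ℕ) :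
    (descPochhammer ℤ m).smeval (r + s) = ∑ n ∈ range (m + 1),
      (m.choose n : ℂ) * ((descPochhammer ℤ n).smeval r * (descPochhammer ℤ (m - n)).smeval s) := by
  rw [Ring.descPochhammer_smeval_add m (Commute.all r s),
    Nat.sum_antidiagonal_eq_sum_range_succ_mk]

lemma poch_add_eq_sum_choose (x y : ℂ) (m : ℕ) :
    poch (x + y) m = ∑ n ∈ range (m + 1), (m.choose n : ℂ) * (poch x n * poch y (m - n)) := by
  rw [poch_eq_neg_one_pow_mul_smeval_descPochhammer, neg_add, smeval_descPochhammer_add, mul_sum]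
  refine sum_congr rfl fun n hn => ?_
  rw [poch_eq_neg_one_pow_mul_smeval_descPochhammer x,
    poch_eq_neg_one_pow_mul_smeval_descPochhammer y,
    ← Nat.add_sub_cancel' (mem_range_succ_iff.1 hn), pow_add, Nat.add_sub_cancel_left]
  ring

lemma poch_eq_sum_choose_neg_one_pow (a c : ℂ) (m : ℕ) :
    poch a m = ∑ n ∈ range (m + 1),
      (-1) ^ n * (m.choose n : ℂ) * (poch (c - a) n * poch (c + n) (m - n)) := by
  rw [poch_eq_smeval_descPochhammer, show a + m - 1 = (a - c) + (c + m - 1) by ring,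
    smeval_descPochhammer_add]
  refine sum_congr rfl fun n hn => ?_
  rw [poch_eq_neg_one_pow_mul_smeval_descPochhammer (c - a), neg_sub, poch_eq_smeval_descPochhammer,
    Nat.cast_sub (mem_range_succ_iff.1 hn), add_add_sub_cancel]
  have hsq : ((-1 : ℂ) ^ n) ^ 2 = 1 := by rw [← pow_mul, mul_comm, pow_mul, neg_one_sq, one_pow]
  linear_combination (-(m.choose n : ℂ) * (descPochhammer ℤ n).smeval (a - c) *
    (descPochhammer ℤ (m - n)).smeval (c + m - 1)) * hsq

lemma poch_eq_mul_poch_sub {n m : ℕ} (h : n ≤ m) (a : ℂ) :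
    poch a m = poch a n * poch (a + n) (m - n) := by
  rw [← poch_add, Nat.add_sub_cancel' h]

lemma sum_choose_neg_one_pow_poch_eq (a b c d : ℂ) (m : ℕ) :
    ∑ n ∈ range (m + 1), (-1) ^ n * (m.choose n : ℂ) * poch b n * poch (c - a) n *
        poch (b + d + n) (m - n) * poch (c + n) (m - n) =
      ∑ i ∈ range (m + 1), (m.choose i : ℂ) * poch a i * poch b i * poch d (m - i) *
        poch (c + i) (m - i) := by
  set F : ℕ → ℕ → ℂ := fun n k => (-1) ^ n * (m.choose n : ℂ) * poch b n * poch (c - a) n *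
    ((m - n).choose k * (poch (b + n) k * poch d (m - n - k))) * poch (c + n) (m - n)
  -- Expand `(b + d + n)_(m-n)` by Vandermonde; after exchanging the sums, the inner sum over `n`
  -- collapses by `poch_eq_sum_choose_neg_one_pow`.
  calc _ = ∑ n ∈ range (m + 1), ∑ k ∈ range (m + 1 - n), F n k := by
        refine sum_congr rfl fun n hn => ?_
        rw [add_right_comm, poch_add_eq_sum_choose, mul_sum, sum_mul,
          Nat.sub_add_comm (mem_range_succ_iff.1 hn)]
    _ = ∑ i ∈ range (m + 1), ∑ n ∈ range (i + 1), F n (i - n) :=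
        (sum_range_diag_flip (m + 1) F).symm
    _ = _ := by
        refine sum_congr rfl fun i hi => ?_
        have him := mem_range_succ_iff.1 hi
        calc ∑ n ∈ range (i + 1), F n (i - n)
            = (m.choose i : ℂ) * poch b i * poch d (m - i) * poch (c + i) (m - i) *
                ∑ n ∈ range (i + 1),
                  (-1) ^ n * (i.choose n : ℂ) * (poch (c - a) n * poch (c + n) (i - n)) := by
              rw [mul_sum]
              refine sum_congr rfl fun n hn => ?_
              have hni := mem_range_succ_iff.1 hn
              have hchoose : (m.choose n * (m - n).choose (i - n) : ℂ) =
                  m.choose i * i.choose n := by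
                exact_mod_cast (Nat.choose_mul (n := m) hni).symm
              simp only [F, Nat.sub_sub_sub_cancel_right hni]
              rw [poch_eq_mul_poch_sub hni b,
                poch_eq_mul_poch_sub (Nat.sub_le_sub_right him n) (c + n),
                Nat.sub_sub_sub_cancel_right hni, add_assoc, ← Nat.cast_add,
                Nat.add_sub_cancel' hni]
              linear_combination ((-1) ^ n * poch b n * poch (b + n) (i - n) * poch (c - a) n *
                poch d (m - i) * poch (c + n) (i - n) * poch (c + i) (m - i)) * hchoose
          _ = _ := by rw [← poch_eq_sum_choose_neg_one_pow]; ring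

noncomputable def kampeDeFerietCoeff (α β a c d : ℂ) (m : ℕ) : ℂ :=
  poch α m / poch β m * ∑ i ∈ range (m + 1),
    poch a i * poch (β - d) i * poch d (m - i) / (poch c i * i ! * (m - i)!)

noncomputable def hypergeom32Coeff (a₁ a₂ a₃ b₁ b₂ : ℂ) (n : ℕ) : ℂ :=
  poch a₁ n * poch a₂ n * poch a₃ n / (poch b₁ n * poch b₂ n * n !)

lemma kampeDeFerietCoeff_eq_sum {α β a c d : ℂ} (hβ : ∀ k : ℕ, β ≠ -k) (hc : ∀ k : ℕ, c ≠ -k)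
    (m : ℕ) :
    kampeDeFerietCoeff α β a c d m = ∑ n ∈ range (m + 1),
      hypergeom32Coeff α (β - d) (c - a) β c n * (-1) ^ n * (poch (α + n) (m - n) / (m - n)!) := by
  have hsum := sum_choose_neg_one_pow_poch_eq a (β - d) c d m
  rw [sub_add_cancel] at hsum
  have hβ' := poch_add_natCast_ne_zero hβ
  have hc' := poch_add_natCast_ne_zero hc
  calc kampeDeFerietCoeff α β a c d m
      = poch α m / (poch β m * poch c m * m !) * ∑ i ∈ range (m + 1),
          (m.choose i : ℂ) * poch a i * poch (β - d) i * poch d (m - i) * poch (c + i) (m - i) := by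
        rw [kampeDeFerietCoeff, mul_sum, mul_sum]
        refine sum_congr rfl fun i hi => ?_
        have him := mem_range_succ_iff.1 hi
        rw [poch_eq_mul_poch_sub him c, Nat.cast_choose ℂ him]
        field_simp [hc' i (m - i), poch_ne_zero hβ m, poch_ne_zero hc i, Nat.factorial_ne_zero]
    _ = _ := by
        rw [← hsum, mul_sum]
        refine sum_congr rfl fun n hn => ?_
        have hnm := mem_range_succ_iff.1 hn
        rw [hypergeom32Coeff, poch_eq_mul_poch_sub hnm α, poch_eq_mul_poch_sub hnm β,
          poch_eq_mul_poch_sub hnm c, Nat.cast_choose ℂ hnm]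
        field_simp [hβ' n (m - n), hc' n (m - n), poch_ne_zero hβ n, poch_ne_zero hc n,
          Nat.factorial_ne_zero]

lemma HasSum.sum_antidiagonal {M : Type*} [AddCommMonoid M] [TopologicalSpace M] [ContinuousAdd M]
    [RegularSpace M] {f : ℕ × ℕ → M} {s : M} (h : HasSum f s) :
    HasSum (fun m => ∑ p ∈ antidiagonal m, f p) s :=
  (HasAntidiagonal.sigmaAntidiagonalEquivProd.hasSum_iff.2 h).sigma fun m =>
    (antidiagonal m).hasSum f

lemma tsum_tsum_eq_tsum_sum_antidiagonal {E : Type*} [NormedAddCommGroup E] [CompleteSpace E]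
    {W : ℕ → ℕ → E}
    (hW : Summable fun p : ℕ × ℕ => ‖W p.1 p.2‖) :
    ∑' i, ∑' n, W i n = ∑' m, ∑ p ∈ antidiagonal m, W p.1 p.2 := by
  rw [← hW.of_norm.tsum_prod, (hW.of_norm.hasSum.sum_antidiagonal).tsum_eq]

section Radius

variable {𝕜 : Type*} [NontriviallyNormedField 𝕜]

lemma exists_norm_mul_pow_le {c : ℕ → 𝕜} (hc : 1 ≤ (ofScalars 𝕜 c).radius) {r : ℝ≥0}
    (hr : r < 1) : ∃ C > 0, ∀ n, ‖c n‖ * r ^ n ≤ C := by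
  simpa only [ofScalars_norm] using
    (ofScalars 𝕜 c).norm_mul_pow_le_of_lt_radius ((ENNReal.coe_lt_one_iff.2 hr).trans_le hc)

lemma one_le_radius_mul {c c' : ℕ → 𝕜} (hc : 1 ≤ (ofScalars 𝕜 c).radius)
    (hc' : 1 ≤ (ofScalars 𝕜 c').radius) : 1 ≤ (ofScalars 𝕜 fun n => c n * c' n).radius := by
  refine ENNReal.le_of_forall_nnreal_lt fun r hr => ?_
  have hs : NNReal.sqrt r < 1 := by simpa using NNReal.sqrt_lt_sqrt.2 (ENNReal.coe_lt_one_iff.1 hr)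
  have hr2 : (r : ℝ) = (NNReal.sqrt r : ℝ) ^ 2 := by rw [← NNReal.coe_pow, NNReal.sq_sqrt]
  obtain ⟨C, hC0, hC⟩ := exists_norm_mul_pow_le hc hs
  obtain ⟨C', -, hC'⟩ := exists_norm_mul_pow_le hc' hs
  refine le_radius_of_bound _ (C * C') fun n => ?_
  calc ‖ofScalars 𝕜 (fun n => c n * c' n) n‖ * (r : ℝ) ^ n
      = (‖c n‖ * NNReal.sqrt r ^ n) * (‖c' n‖ * NNReal.sqrt r ^ n) := by
        rw [ofScalars_norm, norm_mul, hr2]; ring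
    _ ≤ C * C' := mul_le_mul (hC n) (hC' n) (by positivity) hC0.le

lemma summable_norm_mul_mul_mul_pow {g u v : ℕ → 𝕜} (hg : 1 ≤ (ofScalars 𝕜 g).radius)
    (hu : 1 ≤ (ofScalars 𝕜 u).radius) (hv : 1 ≤ (ofScalars 𝕜 v).radius) {x : 𝕜} (hx : ‖x‖ < 1) :
    Summable fun p : ℕ × ℕ => ‖g (p.1 + p.2) * u p.1 * v p.2 * x ^ (p.1 + p.2)‖ := by
  obtain ⟨t, hxt, ht1⟩ := exists_between (show ‖x‖₊ < 1 from hx)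
  have ht0 : (0 : ℝ) < t := (norm_nonneg x).trans_lt hxt
  have hs : NNReal.sqrt t < 1 := by simpa using NNReal.sqrt_lt_sqrt.2 ht1
  obtain ⟨Cg, hCg, hgC⟩ := exists_norm_mul_pow_le hg hs
  obtain ⟨Cu, hCu, huC⟩ := exists_norm_mul_pow_le hu hs
  obtain ⟨Cv, -, hvC⟩ := exists_norm_mul_pow_le hv hs
  set q : ℝ := ‖x‖ / t
  have hq0 : 0 ≤ q := by positivity
  have hq1 : q < 1 := (div_lt_one ht0).2 hxt
  have hgeom := ((summable_geometric_of_lt_one hq0 hq1).mul_of_nonneg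
    (summable_geometric_of_lt_one hq0 hq1) (fun _ => by positivity) fun _ => by positivity).mul_left
    (Cg * Cu * Cv)
  refine hgeom.of_nonneg_of_le (fun _ => norm_nonneg _) fun ⟨i, n⟩ => ?_
  have hx' : ‖x‖ = (NNReal.sqrt t : ℝ) ^ 2 * q := by
    rw [← NNReal.coe_pow, NNReal.sq_sqrt, mul_div_cancel₀ _ ht0.ne']
  calc ‖g (i + n) * u i * v n * x ^ (i + n)‖
      = (‖g (i + n)‖ * NNReal.sqrt t ^ (i + n)) * (‖u i‖ * NNReal.sqrt t ^ i) *
          (‖v n‖ * NNReal.sqrt t ^ n) * (q ^ i * q ^ n) := by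
        rw [norm_mul, norm_mul, norm_mul, norm_pow, hx']
        ring
    _ ≤ Cg * Cu * Cv * (q ^ i * q ^ n) := by
        gcongr
        exacts [hgC _, huC i, hvC n]

lemma analyticOnNhd_tsum_mul_pow [CompleteSpace 𝕜] {c : ℕ → 𝕜}
    (hc : 1 ≤ (ofScalars 𝕜 c).radius) :
    AnalyticOnNhd 𝕜 (fun z => ∑' n, c n * z ^ n) (ball 0 1) := by
  have hsum : (ofScalars 𝕜 c).sum = fun z => ∑' n, c n * z ^ n :=
    funext fun z => (ofScalars_sum_eq c z).trans (by simp only [smul_eq_mul])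
  rw [← hsum, ← Metric.eball_ofReal, ENNReal.ofReal_one]
  exact ((ofScalars 𝕜 c).hasFPowerSeriesOnBall (zero_lt_one.trans_le hc)).analyticOnNhd.mono
    (Metric.eball_subset_eball hc)

end Radius

lemma one_le_radius_poch_div (u : ℂ) {v : ℂ} (hv : ∀ k : ℕ, v ≠ -k) :
    1 ≤ (ofScalars ℂ fun n => poch u n / poch v n).radius := by
  have h2F1 :
      (ofScalars ℂ fun n => poch u n / poch v n) = ordinaryHypergeometricSeries ℂ u 1 v := by
    rw [ordinaryHypergeometricSeries]
    congr 1
    funext n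
    simp only [ordinaryHypergeometricCoefficient, ← poch_eq_eval_ascPochhammer, poch_one]
    field_simp [Nat.factorial_ne_zero]
  rw [h2F1]
  by_cases hu : ∃ k : ℕ, u = -k
  · obtain ⟨k, rfl⟩ := hu
    simp [ordinaryHypergeometric_radius_top_of_neg_nat₁]
  · push Not at hu
    rw [ordinaryHypergeometricSeries_radius_eq_one]
    exact fun k => ⟨fun h => hu k (by linear_combination h),
      fun h => Nat.cast_add_one_ne_zero k (by linear_combination h),
      fun h => hv k (by linear_combination h)⟩

lemma one_le_radius_poch_div_factorial (u : ℂ) :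
    1 ≤ (ofScalars ℂ fun n => poch u n / n !).radius := by
  have h := one_le_radius_poch_div u (v := 1) fun k h =>
    Nat.cast_add_one_ne_zero k (by linear_combination h)
  simp only [poch_one] at h
  exact h

lemma one_le_radius_hypergeom32Coeff (a₁ a₂ a₃ : ℂ) {b₁ b₂ : ℂ} (hb₁ : ∀ k : ℕ, b₁ ≠ -k)
    (hb₂ : ∀ k : ℕ, b₂ ≠ -k) : 1 ≤ (ofScalars ℂ (hypergeom32Coeff a₁ a₂ a₃ b₁ b₂)).radius := by
  have hprod : hypergeom32Coeff a₁ a₂ a₃ b₁ b₂ =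
      fun n => poch a₁ n / poch b₁ n * (poch a₂ n / poch b₂ n) * (poch a₃ n / n !) :=
    funext fun n => by rw [hypergeom32Coeff]; ring
  rw [hprod]
  exact one_le_radius_mul (c := fun n => poch a₁ n / poch b₁ n * (poch a₂ n / poch b₂ n))
    (one_le_radius_mul (one_le_radius_poch_div a₁ hb₁) (one_le_radius_poch_div a₂ hb₂))
    (one_le_radius_poch_div_factorial a₃)

lemma hasSum_poch_div_factorial_mul_pow (s : ℂ) {z : ℂ} (hz : ‖z‖ < 1) :
    HasSum (fun k => poch s k / k ! * z ^ k) ((1 - z) ^ (-s)) := by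
  have h := (Complex.one_div_one_sub_cpow_hasFPowerSeriesOnBall_zero s).hasSum (y := z)
    (by rwa [← ENNReal.ofReal_one, Metric.eball_ofReal, mem_ball_zero_iff])
  simp only [ofScalars_apply_eq, smul_eq_mul, zero_add, one_div, ← Complex.cpow_neg] at h
  refine h.congr_fun fun k => ?_
  rw [Ring.choose_eq_smul, poch_eq_smeval_descPochhammer, smul_eq_mul]
  ring

lemma norm_div_sub_one_lt_one {z : ℂ} (hz : z.re < 1 / 2) : ‖z / (z - 1)‖ < 1 := by
  have hlt : ‖z‖ < ‖z - 1‖ := by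
    rw [← sq_lt_sq₀ (norm_nonneg _) (norm_nonneg _), Complex.sq_norm, Complex.sq_norm,
      Complex.normSq_apply, Complex.normSq_apply]
    simp only [Complex.sub_re, Complex.one_re, Complex.sub_im, Complex.one_im, sub_zero]
    nlinarith
  rw [norm_div, div_lt_one ((norm_nonneg z).trans_lt hlt)]
  exact hlt

lemma analyticOnNhd_cpow_mul_tsum_mul_div_pow {c : ℕ → ℂ} (hc : 1 ≤ (ofScalars ℂ c).radius)
    (s : ℂ) :
    AnalyticOnNhd ℂ (fun z : ℂ => (1 - z) ^ s * ∑' n, c n * (z / (z - 1)) ^ n)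
      {z : ℂ | z.re < 1 / 2} := by
  intro z hz
  have hz1 : z - 1 ≠ 0 := fun h => by
    norm_num [sub_eq_zero.1 h] at hz
  refine ((analyticAt_const.sub analyticAt_id).cpow analyticAt_const ?_).mul ?_
  · show 0 < (1 - z).re ∨ _
    exact Or.inl (by simp only [Complex.sub_re, Complex.one_re]; linarith [hz.out])
  · exact (analyticOnNhd_tsum_mul_pow hc _ (mem_ball_zero_iff.2 (norm_div_sub_one_lt_one hz))).comp
      (f := fun z : ℂ => z / (z - 1)) (analyticAt_id.div (analyticAt_id.sub analyticAt_const) hz1)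

noncomputable def kampeDeFerietTerm (α β a c d x : ℂ) (i n : ℕ) : ℂ :=
  poch α (i + n) / poch β (i + n) * (poch a i * poch (β - d) i * poch d n) * x ^ (i + n) /
    (poch c i * i ! * n !)

-- `k` indexes the binomial series of `(1 - x)^(-(α + n))`.
noncomputable def eulerExpansionTerm (α β a c d x : ℂ) (n k : ℕ) : ℂ :=
  hypergeom32Coeff α (β - d) (c - a) β c n * (-x) ^ n * (poch (α + n) k / k ! * x ^ k)

lemma sum_antidiagonal_kampeDeFerietTerm (α β a c d x : ℂ) (m : ℕ) :
    ∑ p ∈ antidiagonal m, kampeDeFerietTerm α β a c d x p.1 p.2 =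
      kampeDeFerietCoeff α β a c d m * x ^ m := by
  rw [Nat.sum_antidiagonal_eq_sum_range_succ_mk, kampeDeFerietCoeff, mul_sum, sum_mul]
  refine sum_congr rfl fun i hi => ?_
  rw [kampeDeFerietTerm, Nat.add_sub_cancel' (mem_range_succ_iff.1 hi)]
  ring

lemma hasSum_eulerExpansionTerm (α β a c d : ℂ) {x : ℂ} (hx : ‖x‖ < 1) (n : ℕ) :
    HasSum (eulerExpansionTerm α β a c d x n)
      ((1 - x) ^ (-α) * (hypergeom32Coeff α (β - d) (c - a) β c n * (x / (x - 1)) ^ n)) := by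
  have h1x : 1 - x ≠ 0 := fun h => by
    simp [← sub_eq_zero.1 h] at hx
  have hvalue : (1 - x) ^ (-α) * (hypergeom32Coeff α (β - d) (c - a) β c n * (x / (x - 1)) ^ n) =
      hypergeom32Coeff α (β - d) (c - a) β c n * (-x) ^ n * (1 - x) ^ (-(α + n)) := by
    rw [neg_add, Complex.cpow_add _ _ h1x, Complex.cpow_neg _ (n : ℂ), Complex.cpow_natCast,
      show x - 1 = -(1 - x) by ring, div_neg, ← neg_div, div_pow]
    field_simp
  rw [hvalue]
  exact (hasSum_poch_div_factorial_mul_pow (α + n) hx).mul_left _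

lemma eulerExpansionTerm_eq (α β a c d x : ℂ) (n k : ℕ) :
    eulerExpansionTerm α β a c d x n k =
      poch α (n + k) / (n + k)! * ((n + k).choose n : ℂ) *
        (poch (β - d) n / poch β n * (poch (c - a) n / poch c n)) * (-1) ^ n * x ^ (n + k) := by
  rw [eulerExpansionTerm, hypergeom32Coeff, poch_add, Nat.cast_choose ℂ (Nat.le_add_right n k),
    Nat.add_sub_cancel_left, neg_pow, pow_add]
  field_simp [Nat.factorial_ne_zero]

section Expansions

variable {α β a c d : ℂ}

lemma summable_norm_kampeDeFerietTerm (hβ : ∀ k : ℕ, β ≠ -k) (hc : ∀ k : ℕ, c ≠ -k) {x : ℂ}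
    (hx : ‖x‖ < 1) : Summable fun p : ℕ × ℕ => ‖kampeDeFerietTerm α β a c d x p.1 p.2‖ :=
  (summable_norm_mul_mul_mul_pow (one_le_radius_poch_div α hβ)
    (one_le_radius_mul (one_le_radius_poch_div a hc) (one_le_radius_poch_div_factorial (β - d)))
    (one_le_radius_poch_div_factorial d) hx).congr fun p => by
      rw [kampeDeFerietTerm]
      ring_nf

lemma tsum_kampeDeFerietTerm (hβ : ∀ k : ℕ, β ≠ -k) (hc : ∀ k : ℕ, c ≠ -k) {x : ℂ}
    (hx : ‖x‖ < 1) :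
    ∑' i, ∑' n, kampeDeFerietTerm α β a c d x i n =
      ∑' m, kampeDeFerietCoeff α β a c d m * x ^ m := by
  rw [tsum_tsum_eq_tsum_sum_antidiagonal (summable_norm_kampeDeFerietTerm hβ hc hx)]
  exact tsum_congr (sum_antidiagonal_kampeDeFerietTerm α β a c d x)

lemma one_le_radius_kampeDeFerietCoeff (hβ : ∀ k : ℕ, β ≠ -k) (hc : ∀ k : ℕ, c ≠ -k) :
    1 ≤ (ofScalars ℂ (kampeDeFerietCoeff α β a c d)).radius := by
  refine ENNReal.le_of_forall_nnreal_lt fun r hr => le_radius_of_summable_norm _ ?_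
  have hr1 : ‖((r : ℝ) : ℂ)‖ < 1 := by simpa using ENNReal.coe_lt_one_iff.1 hr
  have hW := summable_norm_kampeDeFerietTerm (α := α) (a := a) (d := d) hβ hc hr1
  refine hW.hasSum.sum_antidiagonal.summable.of_nonneg_of_le (fun _ => by positivity) fun m => ?_
  calc ‖ofScalars ℂ (kampeDeFerietCoeff α β a c d) m‖ * (r : ℝ) ^ m
      = ‖∑ p ∈ antidiagonal m, kampeDeFerietTerm α β a c d ((r : ℝ) : ℂ) p.1 p.2‖ := by
        rw [sum_antidiagonal_kampeDeFerietTerm, ofScalars_norm, norm_mul, norm_pow]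
        simp
    _ ≤ _ := norm_sum_le _ _

lemma summable_norm_eulerExpansionTerm (hβ : ∀ k : ℕ, β ≠ -k) (hc : ∀ k : ℕ, c ≠ -k) {x : ℂ}
    (hx : ‖x‖ < 1 / 2) :
    Summable fun p : ℕ × ℕ => ‖eulerExpansionTerm α β a c d x p.1 p.2‖ := by
  have h2x : ‖2 * x‖ < 1 := by rw [norm_mul, Complex.norm_two]; linarith
  have hone : 1 ≤ (ofScalars ℂ fun _ : ℕ => (1 : ℂ)).radius :=
    formalMultilinearSeries_geometric_eq_ofScalars ℂ ℂ ▸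
      one_le_formalMultilinearSeries_geometric_radius ℂ ℂ
  refine (summable_norm_mul_mul_mul_pow (one_le_radius_poch_div_factorial α)
    (one_le_radius_mul (one_le_radius_poch_div (β - d) hβ) (one_le_radius_poch_div (c - a) hc))
    hone h2x).of_nonneg_of_le (fun _ => norm_nonneg _) fun ⟨n, k⟩ => ?_
  -- This crude bound is why the double series is only used for `‖x‖ < 1/2`.
  have hchoose : ‖((n + k).choose n : ℂ)‖ ≤ 2 ^ (n + k) := by
    rw [Complex.norm_natCast]
    exact_mod_cast Nat.choose_le_two_pow (n + k) n
  rw [eulerExpansionTerm_eq]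
  simp only [norm_mul, norm_pow, norm_neg, norm_one, one_pow, mul_one, Complex.norm_two]
  rw [mul_pow]
  calc _ = ‖poch α (n + k) / (n + k)!‖ *
        (‖poch (β - d) n / poch β n‖ * ‖poch (c - a) n / poch c n‖) *
        ‖((n + k).choose n : ℂ)‖ * ‖x‖ ^ (n + k) := by ring
    _ ≤ _ := by
      rw [mul_assoc _ ‖((n + k).choose n : ℂ)‖]
      gcongr

lemma sum_antidiagonal_eulerExpansionTerm (hβ : ∀ k : ℕ, β ≠ -k) (hc : ∀ k : ℕ, c ≠ -k)
    (x : ℂ) (m : ℕ) :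
    ∑ p ∈ antidiagonal m, eulerExpansionTerm α β a c d x p.1 p.2 =
      kampeDeFerietCoeff α β a c d m * x ^ m := by
  rw [Nat.sum_antidiagonal_eq_sum_range_succ_mk, kampeDeFerietCoeff_eq_sum hβ hc, sum_mul]
  refine sum_congr rfl fun n hn => ?_
  rw [eulerExpansionTerm, ← Nat.add_sub_cancel' (mem_range_succ_iff.1 hn), pow_add,
    Nat.add_sub_cancel_left, neg_pow]
  ring

lemma mul_tsum_hypergeom32Coeff_eq (hβ : ∀ k : ℕ, β ≠ -k) (hc : ∀ k : ℕ, c ≠ -k) {x : ℂ}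
    (hx : ‖x‖ < 1 / 2) :
    (1 - x) ^ (-α) * ∑' n, hypergeom32Coeff α (β - d) (c - a) β c n * (x / (x - 1)) ^ n =
      ∑' m, kampeDeFerietCoeff α β a c d m * x ^ m := by
  calc _ = ∑' n, (1 - x) ^ (-α) * (hypergeom32Coeff α (β - d) (c - a) β c n * (x / (x - 1)) ^ n) :=
        tsum_mul_left.symm
    _ = ∑' n, ∑' k, eulerExpansionTerm α β a c d x n k :=
        tsum_congr fun n => (hasSum_eulerExpansionTerm α β a c d (by linarith) n).tsum_eq.symm
    _ = _ := by
        rw [tsum_tsum_eq_tsum_sum_antidiagonal (summable_norm_eulerExpansionTerm hβ hc hx)]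
        exact tsum_congr (sum_antidiagonal_eulerExpansionTerm hβ hc x)

end Expansions

/-- **Cvijović–Miller reduction formula.** -/
theorem cvijovic_miller_reduction
    (α β a c d : ℂ)
    (hβ : ∀ k : ℕ, β ≠ -(k : ℂ)) (hc : ∀ k : ℕ, c ≠ -(k : ℂ)) :
    ∀ x : ℂ, ‖x‖ < 1 → x.re < 1 / 2 →
      (∑' i : ℕ, ∑' n : ℕ,
        poch α (i + n) / poch β (i + n) *
          (poch a i * poch (β - d) i * poch d n) * x ^ (i + n) /
            (poch c i * (Nat.factorial i : ℂ) * (Nat.factorial n : ℂ)))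
      = (1 - x) ^ (-α) *
          ∑' n : ℕ, poch α n * poch (β - d) n * poch (c - a) n *
            (x / (x - 1)) ^ n / (poch β n * poch c n * (Nat.factorial n : ℂ)) := by
  intro x hx hre
  set F := fun z : ℂ => ∑' m, kampeDeFerietCoeff α β a c d m * z ^ m
  set G := fun z : ℂ => (1 - z) ^ (-α) *
    ∑' n, hypergeom32Coeff α (β - d) (c - a) β c n * (z / (z - 1)) ^ n
  set Ω := ball (0 : ℂ) 1 ∩ {z : ℂ | z.re < 1 / 2}
  have hF : AnalyticOnNhd ℂ F Ω :=
    (analyticOnNhd_tsum_mul_pow (one_le_radius_kampeDeFerietCoeff hβ hc)).mono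
      Set.inter_subset_left
  have hG : AnalyticOnNhd ℂ G Ω :=
    (analyticOnNhd_cpow_mul_tsum_mul_div_pow (one_le_radius_hypergeom32Coeff _ _ _ hβ hc) _).mono
      Set.inter_subset_right
  have hFG : F =ᶠ[𝓝 0] G := by
    filter_upwards [ball_mem_nhds (0 : ℂ) one_half_pos] with z hz
    exact (mul_tsum_hypergeom32Coeff_eq hβ hc (mem_ball_zero_iff.1 hz)).symm
  have hΩ : IsPreconnected Ω :=
    ((convex_ball 0 1).inter (convex_halfSpace_re_lt _)).isPreconnected
  have h := hF.eqOn_of_preconnected_of_eventuallyEq hG hΩ ⟨mem_ball_self one_pos, by norm_num⟩ hFG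
    ⟨mem_ball_zero_iff.2 hx, hre⟩
  calc _ = F x := tsum_kampeDeFerietTerm hβ hc hx
    _ = G x := h
    _ = _ := congrArg ((1 - x) ^ (-α) * ·) <| tsum_congr fun n => by
      rw [hypergeom32Coeff]
      ring
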